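/- Let b : ℝ → ℝ be continuous and 2π-periodic, and let c ∈ ℝ. Define H(z) := conj( (1/2π)∫₀^{2π} b(t)·(e^{it} + z)/(e^{it} − z) dt ) + i·c for z in the open unit disk D. Then: (i) the function z ↦ conj(H(z)) is holomorphic on D (i.e., H satisfies ∂H/∂z = 0 on D); (ii) Im H(0) = c; (iii) for every θ₀ ∈ ℝ, Re H(z) → b(θ₀) as z → e^{iθ₀} within D. Moreover, H is the unique function with these three properties among functions K : D → ℂ such that conj∘K is holomorphic on D. -/

import Mathlib

/-!
On the unit circle, `conj H + i c` is the Herglotz–Riesz integral of `ζ ↦ b (arg ζ)`,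
which is continuous on the circle because `b` factors through `ℝ / 2πℤ`; hence it is holomorphic,
and `Re H` is the Poisson integral of the boundary datum. The boundary limit is the
approximate-identity property of the Poisson kernel: it is nonnegative with average one, and on
the part of the circle at distance `≥ δ` from `w` it is at most `(R² - ‖w - c‖²) / δ²`, which
vanishes as `w` tends to the circle.

For uniqueness, the difference `g` of the conjugates of two solutions is holomorphic and `Re g`
tends to `0` at the circle. Extended by `0`, `Re g` is harmonic inside and continuous up to the
boundary, so the Poisson formula forces `Re g = 0`; by the open mapping theorem `g` is then
constant, and `Im g 0 = 0` gives `g = 0`.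
-/

open Complex Real Metric Filter

/-- The open unit disk in `ℂ`. -/
noncomputable def unitDisk : Set ℂ := Metric.ball (0 : ℂ) 1

/-- The conjugated Schwarz integral of a boundary datum `b`, shifted by `i·c`. -/
noncomputable def conjSchwarzIntegral (b : ℝ → ℝ) (c : ℝ) (z : ℂ) : ℂ :=
  (starRingEnd ℂ) ((1 / (2 * Real.pi)) * ∫ t in (0 : ℝ)..(2 * Real.pi),
      (b t : ℂ) * ((Complex.exp (Complex.I * t) + z) / (Complex.exp (Complex.I * t) - z)))
    + Complex.I * c

open Topology ComplexConjugate InnerProductSpace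

namespace Function.Periodic

variable {β : Type*} {b : ℝ → β}

theorem comp_arg_exp_mul_I (hper : Periodic b (2 * π)) (θ : ℝ) :
    b (arg (exp (θ * I))) = b θ := by
  rw [arg_exp_mul_I, ← self_sub_toIocDiv_zsmul, hper.sub_zsmul_eq]

theorem continuousOn_comp_arg [TopologicalSpace β] (hb : Continuous b)
    (hper : Periodic b (2 * π)) :
    ContinuousOn (fun ζ => b (arg ζ)) {0}ᶜ := fun z hz => by
  have hlift : Continuous hper.lift := (QuotientAddGroup.isQuotientMap_mk _).continuous_iff.2 hb
  exact (hlift.continuousAt.comp (f := fun ζ => (arg ζ : Real.Angle))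
    (continuousAt_arg_coe_angle hz)).continuousWithinAt

end Function.Periodic

section PoissonKernel

variable {c w ζ : ℂ} {R : ℝ}

theorem sq_norm_sub_lt_sq_of_mem_ball (hw : w ∈ ball c R) : ‖w - c‖ ^ 2 < R ^ 2 :=
  pow_lt_pow_left₀ (mem_ball_iff_norm.1 hw) (norm_nonneg _) two_ne_zero

theorem poissonKernel_of_mem_sphere (hζ : ζ ∈ sphere c R) :
    poissonKernel c w ζ = (R ^ 2 - ‖w - c‖ ^ 2) / ‖ζ - w‖ ^ 2 := by
  rw [poissonKernel, sub_sub_sub_cancel_right, ← mem_sphere_iff_norm.1 hζ]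

theorem poissonKernel_nonneg (hw : w ∈ ball c R) (hζ : ζ ∈ sphere c R) :
    0 ≤ poissonKernel c w ζ := by
  rw [poissonKernel_of_mem_sphere hζ]
  exact div_nonneg (sub_nonneg.2 (sq_norm_sub_lt_sq_of_mem_ball hw).le) (sq_nonneg _)

theorem poissonKernel_le_of_le_norm_sub (hw : w ∈ ball c R) (hζ : ζ ∈ sphere c R) {δ : ℝ}
    (hδ : 0 < δ) (hζw : δ ≤ ‖ζ - w‖) :
    poissonKernel c w ζ ≤ (R ^ 2 - ‖w - c‖ ^ 2) / δ ^ 2 := by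
  rw [poissonKernel_of_mem_sphere hζ]
  exact div_le_div_of_nonneg_left (sub_nonneg.2 (sq_norm_sub_lt_sq_of_mem_ball hw).le)
    (pow_pos hδ 2) (pow_le_pow_left₀ hδ.le hζw 2)

theorem continuousOn_poissonKernel_sphere (hw : w ∈ ball c R) :
    ContinuousOn (poissonKernel c w) (sphere c |R|) := by
  rw [poissonKernel_eq_re_herglotzRieszKernel]
  exact continuous_re.comp_continuousOn (continuousOn_herglotzRieszKernel_sphere hw)

theorem circleAverage_poissonKernel_mul_const (hw : w ∈ ball c R) (a : ℝ) :
    circleAverage (fun ζ => poissonKernel c w ζ * a) c R = a :=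
  (harmonicOnNhd_const a).harmonicContOnCl.circleAverage_poissonKernel_smul hw

theorem poissonKernel_mul_abs_le (hw : w ∈ ball c R) (hζ : ζ ∈ sphere c R) {x ε δ M : ℝ}
    (hε : 0 ≤ ε) (hδ : 0 < δ) (hnear : ‖ζ - w‖ < δ → |x| ≤ ε) (hbound : |x| ≤ M) :
    poissonKernel c w ζ * |x| ≤ poissonKernel c w ζ * ε + M * ((R ^ 2 - ‖w - c‖ ^ 2) / δ ^ 2) := by
  have hP := poissonKernel_nonneg hw hζ
  have hK : 0 ≤ (R ^ 2 - ‖w - c‖ ^ 2) / δ ^ 2 :=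
    div_nonneg (sub_nonneg.2 (sq_norm_sub_lt_sq_of_mem_ball hw).le) (sq_nonneg δ)
  rcases lt_or_ge ‖ζ - w‖ δ with hζw | hζw
  · nlinarith [hnear hζw, mul_nonneg ((abs_nonneg x).trans hbound) hK]
  · nlinarith [poissonKernel_le_of_le_norm_sub hw hζ hδ hζw, abs_nonneg x]

theorem circleAverage_poissonKernel_smul_sub (hw : w ∈ ball c R) {g : ℂ → ℝ}
    (hg : CircleIntegrable g c R) (a : ℝ) :
    circleAverage (poissonKernel c w • g) c R - a =
      circleAverage (fun ζ => poissonKernel c w ζ * (g ζ - a)) c R := by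
  have hP := continuousOn_poissonKernel_sphere hw
  simp_rw [mul_sub]
  rw [circleAverage_fun_sub (hg.fun_continuousOn_mul hP)
    ((circleIntegrable_const a c R).fun_continuousOn_mul hP),
    circleAverage_poissonKernel_mul_const hw]
  rfl

theorem abs_circleAverage_poissonKernel_smul_sub_le {g : ℂ → ℝ}
    (hg : ContinuousOn g (sphere c R)) (hw : w ∈ ball c R) {a ε δ M : ℝ} (hε : 0 ≤ ε)
    (hδ : 0 < δ) (hnear : ∀ ζ ∈ sphere c R, ‖ζ - w‖ < δ → |g ζ - a| ≤ ε)
    (hbound : ∀ ζ ∈ sphere c R, |g ζ - a| ≤ M) :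
    |circleAverage (poissonKernel c w • g) c R - a| ≤
      ε + M * ((R ^ 2 - ‖w - c‖ ^ 2) / δ ^ 2) := by
  have hR : |R| = R := abs_of_pos (pos_of_mem_ball hw)
  have hP := continuousOn_poissonKernel_sphere hw
  rw [← hR] at hg
  set K := M * ((R ^ 2 - ‖w - c‖ ^ 2) / δ ^ 2)
  calc |circleAverage (poissonKernel c w • g) c R - a|
      = |circleAverage (fun ζ => poissonKernel c w ζ * (g ζ - a)) c R| := by
        rw [circleAverage_poissonKernel_smul_sub hw hg.circleIntegrable']
    _ ≤ circleAverage (fun ζ => |poissonKernel c w ζ * (g ζ - a)|) c R :=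
        abs_circleAverage_le_circleAverage_abs
    _ ≤ circleAverage (fun ζ => poissonKernel c w ζ * ε + K) c R := by
        refine circleAverage_mono (hP.mul (hg.sub continuousOn_const)).abs.circleIntegrable'
          ((hP.mul continuousOn_const).add continuousOn_const).circleIntegrable' fun ζ hζ => ?_
        rw [hR] at hζ
        rw [abs_mul, abs_of_nonneg (poissonKernel_nonneg hw hζ)]
        exact poissonKernel_mul_abs_le hw hζ hε hδ (hnear ζ hζ) (hbound ζ hζ)
    _ = ε + K := by
        rw [circleAverage_fun_add ((circleIntegrable_const ε c R).fun_continuousOn_mul hP)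
          (circleIntegrable_const K c R), circleAverage_poissonKernel_mul_const hw,
          circleAverage_const]

theorem tendsto_circleAverage_poissonKernel_smul {ζ₀ : ℂ} {g : ℂ → ℝ}
    (hg : ContinuousOn g (sphere c R)) (hζ₀ : ζ₀ ∈ sphere c R) :
    Tendsto (fun w => circleAverage (poissonKernel c w • g) c R) (𝓝[ball c R] ζ₀)
      (𝓝 (g ζ₀)) := by
  obtain ⟨M, hM⟩ := (isCompact_sphere c R).exists_bound_of_continuousOn hg
  rw [Metric.tendsto_nhds]
  intro ε hε
  obtain ⟨δ, hδ, hgδ⟩ := Metric.continuousWithinAt_iff.1 (hg ζ₀ hζ₀) (ε / 2) (half_pos hε)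
  have hbound : ∀ ζ ∈ sphere c R, |g ζ - g ζ₀| ≤ 2 * M := fun ζ hζ =>
    (abs_sub _ _).trans ((add_le_add (hM ζ hζ) (hM ζ₀ hζ₀)).trans_eq (two_mul M).symm)
  have hvanish : Tendsto (fun w => 2 * M * ((R ^ 2 - ‖w - c‖ ^ 2) / (δ / 2) ^ 2)) (𝓝 ζ₀)
      (𝓝 0) := by
    have hcont : Continuous fun w : ℂ => 2 * M * ((R ^ 2 - ‖w - c‖ ^ 2) / (δ / 2) ^ 2) := by
      fun_prop
    simpa [mem_sphere_iff_norm.1 hζ₀] using hcont.tendsto ζ₀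
  filter_upwards [self_mem_nhdsWithin, nhdsWithin_le_nhds (ball_mem_nhds ζ₀ (half_pos hδ)),
    nhdsWithin_le_nhds (hvanish.eventually (gt_mem_nhds (half_pos hε)))] with w hw hwζ₀ hsmall
  have hnear : ∀ ζ ∈ sphere c R, ‖ζ - w‖ < δ / 2 → |g ζ - g ζ₀| ≤ ε / 2 := fun ζ hζ hζw => by
    refine (hgδ hζ ?_).le
    calc dist ζ ζ₀ ≤ dist ζ w + dist w ζ₀ := dist_triangle _ _ _
      _ < δ / 2 + δ / 2 := add_lt_add (by rwa [dist_eq_norm]) hwζ₀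
      _ = δ := add_halves δ
  rw [Real.dist_eq]
  calc _ ≤ ε / 2 + 2 * M * ((R ^ 2 - ‖w - c‖ ^ 2) / (δ / 2) ^ 2) :=
        abs_circleAverage_poissonKernel_smul_sub_le hg hw (half_pos hε).le (half_pos hδ) hnear
          hbound
    _ < ε := by linarith

end PoissonKernel

theorem continuousOn_indicator_ball {X β : Type*} [PseudoMetricSpace X] [TopologicalSpace β]
    [Zero β] {f : X → β} {c : X} {R : ℝ} (hf : ContinuousOn f (ball c R))
    (hbd : ∀ ζ ∈ sphere c R, Tendsto f (𝓝[ball c R] ζ) (𝓝 0)) :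
    ContinuousOn ((ball c R).indicator f) (closedBall c R) := by
  rw [← ball_union_sphere]
  rintro x (hx | hx)
  · refine ((hf.continuousAt (isOpen_ball.mem_nhds hx)).congr ?_).continuousWithinAt
    filter_upwards [isOpen_ball.mem_nhds hx] with y hy using (Set.indicator_of_mem hy f).symm
  · have hzero : ∀ y ∈ sphere c R, (ball c R).indicator f y = 0 := fun y hy =>
      Set.indicator_of_notMem (sphere_disjoint_ball.notMem_of_mem_left hy) f
    rw [ContinuousWithinAt, nhdsWithin_union, hzero x hx]
    refine Tendsto.sup ((hbd x hx).congr' ?_) (tendsto_const_nhds.congr' ?_)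
    · filter_upwards [self_mem_nhdsWithin] with y hy using (Set.indicator_of_mem hy f).symm
    · filter_upwards [self_mem_nhdsWithin] with y hy using (hzero y hy).symm

theorem DifferentiableOn.eq_of_re_eq_zero {U : Set ℂ} {g : ℂ → ℂ} (hg : DifferentiableOn ℂ g U)
    (hU : IsOpen U) (hUc : IsPreconnected U) (hre : ∀ z ∈ U, (g z).re = 0) {z₀ z : ℂ}
    (hz₀ : z₀ ∈ U) (hz : z ∈ U) : g z = g z₀ := by
  rcases (hg.analyticOnNhd hU).is_constant_or_isOpen hUc with ⟨w, hw⟩ | hopen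
  · rw [hw z hz, hw z₀ hz₀]
  · exfalso
    obtain ⟨ε, hε, hball⟩ := Metric.isOpen_iff.1 (hopen U subset_rfl hU) (g z₀) ⟨z₀, hz₀, rfl⟩
    obtain ⟨y, hy, hgy⟩ := hball (show g z₀ + (ε / 2 : ℝ) ∈ ball (g z₀) ε by
      simp [abs_of_pos hε, hε])
    have := congrArg re hgy
    simp [hre y hy, hre z₀ hz₀] at this
    linarith

section BoundaryUniqueness

variable {c z : ℂ} {R : ℝ} {g : ℂ → ℂ}

theorem re_eq_zero_of_tendsto_re_sphere (hg : DifferentiableOn ℂ g (ball c R))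
    (hbd : ∀ ζ ∈ sphere c R, Tendsto (fun w => (g w).re) (𝓝[ball c R] ζ) (𝓝 0))
    (hz : z ∈ ball c R) : (g z).re = 0 := by
  set u := (ball c R).indicator fun w => (g w).re
  have hharm : HarmonicOnNhd (fun w => (g w).re) (ball c R) := fun x hx =>
    (hg.analyticAt (isOpen_ball.mem_nhds hx)).harmonicAt_re
  have hu : HarmonicContOnCl u (ball c R) := by
    refine ⟨fun x hx => (harmonicAt_congr_nhds ?_).2 (hharm x hx), ?_⟩
    · filter_upwards [isOpen_ball.mem_nhds hx] with y hy using Set.indicator_of_mem hy _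
    · rw [closure_ball c (pos_of_mem_ball hz).ne']
      exact continuousOn_indicator_ball hharm.continuousOn hbd
  have huz : u z = (g z).re := Set.indicator_of_mem hz _
  rw [← huz, ← hu.circleAverage_poissonKernel_smul hz]
  refine circleAverage_const_on_circle fun ζ hζ => ?_
  rw [abs_of_pos (pos_of_mem_ball hz)] at hζ
  simp [u, Set.indicator_of_notMem (sphere_disjoint_ball.notMem_of_mem_left hζ)]

theorem eq_zero_of_tendsto_re_sphere (hg : DifferentiableOn ℂ g (ball c R))
    (hbd : ∀ ζ ∈ sphere c R, Tendsto (fun w => (g w).re) (𝓝[ball c R] ζ) (𝓝 0))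
    (him : (g c).im = 0) (hz : z ∈ ball c R) : g z = 0 := by
  have hc : c ∈ ball c R := mem_ball_self (pos_of_mem_ball hz)
  rw [hg.eq_of_re_eq_zero isOpen_ball (convex_ball c R).isPreconnected
    (fun w hw => re_eq_zero_of_tendsto_re_sphere hg hbd hw) hc hz]
  exact Complex.ext (re_eq_zero_of_tendsto_re_sphere hg hbd hc) him

end BoundaryUniqueness

section SchwarzIntegral

variable {b : ℝ → ℝ}

theorem continuousOn_comp_arg_sphere (hb : Continuous b) (hper : Function.Periodic b (2 * π)) :
    ContinuousOn (fun ζ => b (arg ζ)) (sphere 0 1) :=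
  (hper.continuousOn_comp_arg hb).mono fun _ hζ => ne_of_mem_sphere hζ one_ne_zero

theorem conj_conjSchwarzIntegral (hper : Function.Periodic b (2 * π)) (c : ℝ) (z : ℂ) :
    conj (conjSchwarzIntegral b c z) =
      circleAverage (fun ζ => herglotzRieszKernel 0 z ζ • (b (arg ζ) : ℂ)) 0 1 - I * c := by
  have hintegrand : ∀ θ : ℝ, herglotzRieszKernel 0 z (circleMap 0 1 θ) •
      (b (arg (circleMap 0 1 θ)) : ℂ) = b θ * ((exp (I * θ) + z) / (exp (I * θ) - z)) := by
    intro θ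
    rw [circleMap_zero, ofReal_one, one_mul, hper.comp_arg_exp_mul_I, herglotzRieszKernel,
      smul_eq_mul, mul_comm I, sub_zero, sub_zero, mul_comm]
  simp only [conjSchwarzIntegral, map_add, conj_conj, map_mul, conj_I, conj_ofReal,
    circleAverage_def, hintegrand, real_smul]
  push_cast
  ring

theorem differentiableOn_conj_conjSchwarzIntegral (hb : Continuous b)
    (hper : Function.Periodic b (2 * π)) (c : ℝ) :
    DifferentiableOn ℂ (fun z => conj (conjSchwarzIntegral b c z)) (ball 0 1) := by
  simp only [conj_conjSchwarzIntegral hper]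
  refine (differentiableOn_circleAverage_herglotzRieszKernel_smul ?_).sub_const _
  exact (continuous_ofReal.comp_continuousOn
    (continuousOn_comp_arg_sphere hb hper)).circleIntegrable zero_le_one

theorem re_conjSchwarzIntegral (hb : Continuous b) (hper : Function.Periodic b (2 * π)) (c : ℝ)
    {z : ℂ} (hz : z ∈ ball 0 1) :
    (conjSchwarzIntegral b c z).re =
      circleAverage (poissonKernel 0 z • fun ζ => b (arg ζ)) 0 1 := by
  rw [← conj_re, conj_conjSchwarzIntegral hper, sub_re, re_circleAverage_herglotzRieszKernel_smul
    ((continuousOn_comp_arg_sphere hb hper).circleIntegrable zero_le_one) hz,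
    poissonKernel_eq_re_herglotzRieszKernel]
  simp

theorem im_conjSchwarzIntegral_zero (c : ℝ) : (conjSchwarzIntegral b c 0).im = c := by
  simp [conjSchwarzIntegral, intervalIntegral.integral_ofReal]

end SchwarzIntegral

/-- The Schwarz boundary value problem for anti-holomorphic functions (`∂H/∂z = 0`,
i.e. `conj ∘ H` holomorphic) on the unit disk with continuous boundary datum:
existence, boundary behavior, normalization, and uniqueness in the class of functions
whose conjugate is holomorphic. -/
theorem schwarz_bvp_antiholomorphic (b : ℝ → ℝ) (hb : Continuous b)
    (hbper : Function.Periodic b (2 * Real.pi)) (c : ℝ) :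
    (∀ z ∈ unitDisk, DifferentiableAt ℂ
        (fun w => (starRingEnd ℂ) (conjSchwarzIntegral b c w)) z) ∧
      (conjSchwarzIntegral b c 0).im = c ∧
      (∀ θ₀ : ℝ, Tendsto (fun z => (conjSchwarzIntegral b c z).re)
        (nhdsWithin (Complex.exp (Complex.I * θ₀)) unitDisk) (nhds (b θ₀))) ∧
      (∀ K : ℂ → ℂ,
        (∀ z ∈ unitDisk, DifferentiableAt ℂ (fun w => (starRingEnd ℂ) (K w)) z) →
        (K 0).im = c →
        (∀ θ₀ : ℝ, Tendsto (fun z => (K z).re)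
          (nhdsWithin (Complex.exp (Complex.I * θ₀)) unitDisk) (nhds (b θ₀))) →
        ∀ z ∈ unitDisk, K z = conjSchwarzIntegral b c z) := by
  have hdiff := differentiableOn_conj_conjSchwarzIntegral hb hbper c
  have hbdry (θ₀ : ℝ) : Tendsto (fun z => (conjSchwarzIntegral b c z).re)
      (𝓝[unitDisk] (exp (I * θ₀))) (𝓝 (b θ₀)) := by
    have h := tendsto_circleAverage_poissonKernel_smul (continuousOn_comp_arg_sphere hb hbper)
      (show exp (θ₀ * I) ∈ sphere (0 : ℂ) 1 by simp)
    rw [hbper.comp_arg_exp_mul_I, mul_comm] at h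
    refine h.congr' ?_
    filter_upwards [self_mem_nhdsWithin] with z hz using
      (re_conjSchwarzIntegral hb hbper c hz).symm
  refine ⟨fun z hz => hdiff.differentiableAt (isOpen_ball.mem_nhds hz),
    im_conjSchwarzIntegral_zero c, hbdry, fun K hK hKim hKbdry z hz => ?_⟩
  have hg : DifferentiableOn ℂ (fun w => conj (K w) - conj (conjSchwarzIntegral b c w))
      (ball 0 1) := fun w hw =>
    ((hK w hw).sub (hdiff.differentiableAt (isOpen_ball.mem_nhds hw))).differentiableWithinAt
  have hzero : conj (K z) - conj (conjSchwarzIntegral b c z) = 0 := by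
    refine eq_zero_of_tendsto_re_sphere
      (g := fun w => conj (K w) - conj (conjSchwarzIntegral b c w)) hg (fun ζ hζ => ?_) ?_ hz
    · obtain ⟨θ, rfl⟩ := (norm_eq_one_iff ζ).1 (mem_sphere_zero_iff_norm.1 hζ)
      simpa [mul_comm I, unitDisk] using (hKbdry θ).sub (hbdry θ)
    · simp [hKim, im_conjSchwarzIntegral_zero]
  exact (starRingEnd ℂ).injective (sub_eq_zero.1 hzero)
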